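/- Let X be a smooth projective threefold, E a rank r vector bundle on X with Chern classes d₁, d₂, d₃, Y a smooth surface in |det E|, and Z ⊂ Y an effective divisor on Y with class c₂(E) in X such that there is an exact sequence 0 → E* → O_X^{⊕r} → O_Y(Z) → 0. Then, computing Euler characteristics via Riemann–Roch on X and Y (with K_Y = (K_X + Y)|_Y), one obtains d₃ = Z², where Z² is computed on Y. -/
import Mathlib


/- The Euler-characteristic computation of Lemma `zeta1` on a smooth projective
threefold X: with c₁, c₂ the Chern classes of X, d₁, d₂, d₃ those of the rank r
bundle E, Y ∈ |det E| smooth, Z ⊂ Y with [Z] = c₂(E), Z² computed on Y, and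
Riemann–Roch/additivity of χ for 0 → E* → O_X^{⊕r} → O_Y(Z) → 0
(all intersection numbers regarded as rational numbers), one obtains d₃ = Z². -/
theorem stmt_8 (r : ℕ)
    (χO χEstar χOY χOYZ c1 c2 d1 d2 d3 z2 : ℚ)
    (hRRE : χEstar = (r : ℚ) * χO - (1/12) * d1 * (c1 ^ 2 + c2)
      + (1/4) * c1 * (d1 ^ 2 - 2 * d2) - (1/6) * (d1 ^ 3 - 3 * d1 * d2 + 3 * d3))
    (hRRY : χOY = (1/12) * d1 * (d1 - c1) * (2 * d1 - c1) + (1/12) * d1 * c2)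
    (hRRZ : χOYZ = χOY + (1/2) * d2 * (c1 - d1) + (1/2) * z2)
    (hadd : (r : ℚ) * χO = χEstar + χOYZ) :
    d3 = z2 := by
  linear_combination 2*(hRRE + hRRY + hRRZ + hadd)
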